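/- arXiv:1409.5299 — 7 statements merged into one kernel-verified Lean document; each statement's English description precedes it below -/
import Mathlib

section
/- For all 3×3 matrices ξ and vectors u, v ∈ ℝ³, ⟨ξ, u ⊗ v⟩ = adj(ξ + u ⊗ v) − adj ξ. -/
/-- The alternating (Levi-Civita) symbol on three indices. -/
noncomputable def eps (i j k : Fin 3) : ℝ :=
  (((j : ℝ) - (i : ℝ)) * ((k : ℝ) - (i : ℝ)) * ((k : ℝ) - (j : ℝ))) / 2

/-- The bilinear polarization `⟨ξ,η⟩ = ∂_t|_{t=0} adj(ξ + tη)` of the adjugate,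
given explicitly by `⟨ξ,η⟩_{ij} = ε^{jab} ε^{icd} ξ_{ac} η_{bd}`. -/
noncomputable def bracket (ξ η : Matrix (Fin 3) (Fin 3) ℝ) : Matrix (Fin 3) (Fin 3) ℝ :=
  Matrix.of fun i j => ∑ a, ∑ b, ∑ c, ∑ d, eps j a b * eps i c d * ξ a c * η b d

/-- ⟨ξ, u ⊗ v⟩ = adj(ξ + u ⊗ v) − adj ξ. -/
theorem bracket_vecMulVec (ξ : Matrix (Fin 3) (Fin 3) ℝ) (u v : Fin 3 → ℝ) :
    bracket ξ (Matrix.vecMulVec u v)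
      = Matrix.adjugate (ξ + Matrix.vecMulVec u v) - Matrix.adjugate ξ := by
  ext i j
  simp only [bracket, Matrix.of_apply, Fin.sum_univ_three, Matrix.sub_apply,
    Matrix.adjugate_fin_three, Matrix.add_apply, Matrix.vecMulVec_apply, eps]
  fin_cases i <;> fin_cases j <;> norm_num <;> ring
end

section
/- For all invertible 3×3 matrices F and all unit vectors v ∈ ℝ³, ⟨F, v ⊗ F^T v⟩ = ((F^{-1}v · F^T v) 1 − F^{-1}v ⊗ F^T v) adj F. -/
open Matrix

lemma vecMulVec_smul_left (c : ℝ) (u w : Fin 3 → ℝ) :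
    vecMulVec (c • u) w = c • vecMulVec u w := by
  ext i j
  simp [Matrix.vecMulVec_apply, mul_assoc]

set_option maxHeartbeats 4000000 in
lemma bracket_key (F : Matrix (Fin 3) (Fin 3) ℝ) (v : Fin 3 → ℝ) :
    F.det • bracket F (vecMulVec v (F.transpose *ᵥ v))
      = (((F.adjugate *ᵥ v) ⬝ᵥ (F.transpose *ᵥ v)) • (1 : Matrix (Fin 3) (Fin 3) ℝ)
          - vecMulVec (F.adjugate *ᵥ v) (F.transpose *ᵥ v)) * F.adjugate := by
  ext i j
  fin_cases i <;> fin_cases j <;>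
  · simp only [bracket, Matrix.of_apply, Fin.sum_univ_three, Matrix.smul_apply]
    norm_num [eps]
    simp only [Matrix.mul_apply, Matrix.sub_apply, Matrix.smul_apply,
      Matrix.one_apply, Matrix.vecMulVec_apply, Matrix.mulVec, dotProduct,
      Matrix.transpose_apply, Pi.smul_apply, smul_eq_mul, Fin.sum_univ_three,
      Matrix.adjugate_fin_three, Matrix.det_fin_three, Matrix.of_apply,
      Matrix.cons_val', Matrix.cons_val_zero, Matrix.cons_val_one, Matrix.cons_val, Matrix.head_cons,
      Matrix.empty_val', Matrix.cons_val_fin_one, Matrix.head_fin_const]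
    norm_num [Fin.ext_iff]
    ring

/-- for invertible F and a unit vector v,
⟨F, v ⊗ Fᵀv⟩ = ((F⁻¹v · Fᵀv) 1 − F⁻¹v ⊗ Fᵀv) adj F. -/
theorem bracket_eq_of_invertible (F : Matrix (Fin 3) (Fin 3) ℝ) (hF : IsUnit F.det)
    (v : Fin 3 → ℝ) (hv : v ⬝ᵥ v = 1) :
    bracket F (vecMulVec v (F.transpose *ᵥ v))
      = (((F⁻¹ *ᵥ v) ⬝ᵥ (F.transpose *ᵥ v)) • (1 : Matrix (Fin 3) (Fin 3) ℝ)
          - vecMulVec (F⁻¹ *ᵥ v) (F.transpose *ᵥ v)) * F.adjugate := by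
  have hd : F.det ≠ 0 := hF.ne_zero
  rw [Matrix.inv_def, Ring.inverse_eq_inv', Matrix.smul_mulVec,
    smul_dotProduct, vecMulVec_smul_left, smul_eq_mul, mul_smul, ← smul_sub,
    Matrix.smul_mul, ← bracket_key, smul_smul, inv_mul_cancel₀ hd, one_smul]
end

section
/- For every 3×3 real matrix F and every unit vector v ∈ ℝ³, adj F = (adj F)(v ⊗ v) + ⟨F, v ⊗ F^T v⟩. -/
open Matrix

set_option maxHeartbeats 2000000 in
/-- adj F = (adj F)(v ⊗ v) + ⟨F, v ⊗ Fᵀv⟩ for any F and unit vector v. -/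
theorem adjugate_decomposition (F : Matrix (Fin 3) (Fin 3) ℝ)
    (v : Fin 3 → ℝ) (hv : v ⬝ᵥ v = 1) :
    F.adjugate = F.adjugate * vecMulVec v v + bracket F (vecMulVec v (F.transpose *ᵥ v)) := by
  simp only [dotProduct, Fin.sum_univ_three] at hv
  ext i j
  fin_cases i <;> fin_cases j <;>
    simp [Matrix.adjugate_fin_three, bracket, eps, Matrix.mul_apply, vecMulVec_apply, mulVec,
      dotProduct, vecMul, Fin.sum_univ_three]
  · linear_combination (-1 * (F 1 1 * F 2 2 - F 1 2 * F 2 1)) * hv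
  · linear_combination (-1 * (-(F 0 1 * F 2 2) + F 0 2 * F 2 1)) * hv
  · linear_combination (-1 * (F 0 1 * F 1 2 - F 0 2 * F 1 1)) * hv
  · linear_combination (-1 * (-(F 1 0 * F 2 2) + F 1 2 * F 2 0)) * hv
  · linear_combination (-1 * (F 0 0 * F 2 2 - F 0 2 * F 2 0)) * hv
  · linear_combination (-1 * (-(F 0 0 * F 1 2) + F 0 2 * F 1 0)) * hv
  · linear_combination (-1 * (F 1 0 * F 2 1 - F 1 1 * F 2 0)) * hv
  · linear_combination (-1 * (-(F 0 0 * F 2 1) + F 0 1 * F 2 0)) * hv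
  · linear_combination (-1 * (F 0 0 * F 1 1 - F 0 1 * F 1 0)) * hv
end

section
/- For every 3×3 real matrix F and every unit vector v ∈ ℝ³, ⟨F, v ⊗ F^T v⟩ v = 0, i.e. the vector v lies in the kernel of the matrix ⟨F, v ⊗ F^T v⟩. -/
open Matrix

/-- ⟨F, v ⊗ Fᵀv⟩ v = 0 for any F and unit vector v. -/
theorem bracket_mulVec_self (F : Matrix (Fin 3) (Fin 3) ℝ)
    (v : Fin 3 → ℝ) (hv : v ⬝ᵥ v = 1) :
    (bracket F (vecMulVec v (F.transpose *ᵥ v))) *ᵥ v = 0 := by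
  clear hv
  funext i
  simp only [bracket, eps, vecMulVec, mulVec, dotProduct, transpose_apply, of_apply,
    Fin.sum_univ_three, Pi.zero_apply]
  fin_cases i <;> simp <;> ring
end

section
/- For every invertible 3×3 matrix F, every unit vector v, and every vector τ ∈ ℝ³ with τ · v = 0, one has (adj F) τ = ⟨F, v ⊗ F^T v⟩ τ. -/
open Matrix

set_option maxHeartbeats 2000000 in
/-- for invertible F, unit v and τ ⊥ v, (adj F) τ = ⟨F, v ⊗ Fᵀv⟩ τ. -/
theorem adjugate_mulVec_orthogonal (F : Matrix (Fin 3) (Fin 3) ℝ) (hF : IsUnit F.det)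
    (v τ : Fin 3 → ℝ) (hv : v ⬝ᵥ v = 1) (hτ : τ ⬝ᵥ v = 0) :
    F.adjugate *ᵥ τ = (bracket F (vecMulVec v (F.transpose *ᵥ v))) *ᵥ τ := by
  funext i
  simp only [bracket, eps, Matrix.adjugate_fin_three, mulVec, dotProduct, vecMulVec, transpose,
    Fin.sum_univ_three, Matrix.of_apply, Matrix.cons_val', Matrix.cons_val_zero,
    Matrix.cons_val_one, Matrix.head_cons, Matrix.cons_val_fin_one, Matrix.empty_val',
    Matrix.head_fin_const] at *
  fin_cases i <;> norm_num [Matrix.cons_val_two]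
  · linear_combination (-(((F 1 1 * F 2 2 - F 1 2 * F 2 1)) * τ 0 + (-(F 0 1 * F 2 2 - F 0 2 * F 2 1)) * τ 1 + ((F 0 1 * F 1 2 - F 0 2 * F 1 1)) * τ 2)) * hv + (((F 1 1 * F 2 2 - F 1 2 * F 2 1)) * v 0 + (-(F 0 1 * F 2 2 - F 0 2 * F 2 1)) * v 1 + ((F 0 1 * F 1 2 - F 0 2 * F 1 1)) * v 2) * hτ
  · linear_combination (-((-(F 1 0 * F 2 2 - F 1 2 * F 2 0)) * τ 0 + ((F 0 0 * F 2 2 - F 0 2 * F 2 0)) * τ 1 + (-(F 0 0 * F 1 2 - F 0 2 * F 1 0)) * τ 2)) * hv + ((-(F 1 0 * F 2 2 - F 1 2 * F 2 0)) * v 0 + ((F 0 0 * F 2 2 - F 0 2 * F 2 0)) * v 1 + (-(F 0 0 * F 1 2 - F 0 2 * F 1 0)) * v 2) * hτ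
  · linear_combination (-(((F 1 0 * F 2 1 - F 1 1 * F 2 0)) * τ 0 + (-(F 0 0 * F 2 1 - F 0 1 * F 2 0)) * τ 1 + ((F 0 0 * F 1 1 - F 0 1 * F 1 0)) * τ 2)) * hv + (((F 1 0 * F 2 1 - F 1 1 * F 2 0)) * v 0 + (-(F 0 0 * F 2 1 - F 0 1 * F 2 0)) * v 1 + ((F 0 0 * F 1 1 - F 0 1 * F 1 0)) * v 2) * hτ
end

section
/- Let r: (0,1] → (0,∞) be C¹ and u(x) = r(|x|) x/|x| on the punctured unit ball of ℝ³. Then for all x ≠ 0, (adj ∇u(x)) (u(x)/|u(x)|³) = x/|x|³. In particular, for every exponent q, ∫_B |adj ∇u (u/|u|³)|^q dx = ∫_B |x|^{-2q} dx. -/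
open Matrix MeasureTheory

/-- The Euclidean norm on ℝ³ (realized as `Fin 3 → ℝ`). -/
noncomputable def norm3 (x : Fin 3 → ℝ) : ℝ := Real.sqrt (∑ i, x i ^ 2)

noncomputable def pr (i : Fin 3) : (Fin 3 → ℝ) →L[ℝ] ℝ :=
  ContinuousLinearMap.proj (R := ℝ) (φ := fun _ : Fin 3 => ℝ) i

lemma norm3_pos {x : Fin 3 → ℝ} (hx : x ≠ 0) : 0 < norm3 x := by
  apply Real.sqrt_pos.2
  rcases Function.ne_iff.1 hx with ⟨i, hi⟩
  refine Finset.sum_pos' (fun j _ => sq_nonneg _) ⟨i, Finset.mem_univ i,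
    by simpa [sq_abs] using pow_pos (abs_pos.2 hi) 2⟩

lemma norm3_smul (c : ℝ) (x : Fin 3 → ℝ) : norm3 (c • x) = |c| * norm3 x := by
  simp only [norm3, Pi.smul_apply, smul_eq_mul, mul_pow, ← Finset.mul_sum]
  rw [Real.sqrt_mul (sq_nonneg c), Real.sqrt_sq_eq_abs]

lemma sum_sq_hasFDerivAt (x : Fin 3 → ℝ) :
    HasFDerivAt (fun y : Fin 3 → ℝ => ∑ i, y i ^ 2)
      (∑ i : Fin 3, ((x i) • pr i + (x i) • pr i)) x := by
  apply HasFDerivAt.fun_sum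
  intro i _
  have h : HasFDerivAt (fun y : Fin 3 → ℝ => y i * y i) ((x i) • pr i + (x i) • pr i) x :=
    HasFDerivAt.mul ((pr i).hasFDerivAt (x := x)) ((pr i).hasFDerivAt (x := x))
  simpa [sq] using h

lemma norm3_hasFDerivAt {x : Fin 3 → ℝ} (hx : x ≠ 0) :
    HasFDerivAt norm3
      ((1 / (2 * norm3 x)) • ∑ i : Fin 3, ((x i) • pr i + (x i) • pr i)) x := by
  have hS : (∑ i, x i ^ 2) ≠ 0 := by
    have := norm3_pos hx
    intro h; rw [norm3, h, Real.sqrt_zero] at this; exact lt_irrefl _ this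
  have := (Real.hasDerivAt_sqrt hS).comp_hasFDerivAt x (sum_sq_hasFDerivAt x)
  rw [show norm3 = fun y => Real.sqrt (∑ i, y i ^ 2) from rfl]
  simpa [norm3, Function.comp_def] using this

lemma fderiv_u_single {r r' : ℝ → ℝ} {u : (Fin 3 → ℝ) → (Fin 3 → ℝ)}
    (hu : ∀ y, u y = (r (norm3 y) / norm3 y) • y)
    {x : Fin 3 → ℝ} (hx : x ≠ 0) (hd : HasDerivAt r (r' (norm3 x)) (norm3 x)) (i j : Fin 3) :
    fderiv ℝ u x (Pi.single j 1) i =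
      (r' (norm3 x) / (norm3 x) ^ 2 - r (norm3 x) / (norm3 x) ^ 3) * x i * x j
        + (r (norm3 x) / norm3 x) * (if i = j then 1 else 0) := by
  have hR : 0 < norm3 x := norm3_pos hx
  have hN := norm3_hasFDerivAt hx
  have h1 : HasFDerivAt (fun y => r (norm3 y))
      ((r' (norm3 x)) • ((1 / (2 * norm3 x)) • ∑ i : Fin 3, ((x i) • pr i + (x i) • pr i))) x :=
    hd.comp_hasFDerivAt x hN
  have h2 : HasFDerivAt (fun y => (norm3 y)⁻¹)
      ((-((norm3 x) ^ 2)⁻¹) • ((1 / (2 * norm3 x)) • ∑ i : Fin 3, ((x i) • pr i + (x i) • pr i))) x :=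
    (hasDerivAt_inv hR.ne').comp_hasFDerivAt x hN
  have h3 := h1.fun_mul h2
  have h4 := h3.fun_smul (hasFDerivAt_id x)
  simp only [id_eq] at h4
  have hufun : u = fun y => (r (norm3 y) * (norm3 y)⁻¹) • y := by
    funext y; rw [hu y, div_eq_mul_inv]
  have hsum : (∑ k : Fin 3, ((x k) • pr k + (x k) • pr k)) (Pi.single j 1) = 2 * x j := by
    simp only [ContinuousLinearMap.sum_apply, ContinuousLinearMap.add_apply,
      ContinuousLinearMap.smul_apply, pr, ContinuousLinearMap.proj_apply, smul_eq_mul,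
      Pi.single_apply, mul_ite, mul_one, mul_zero]
    rw [Finset.sum_add_distrib]
    simp [Finset.sum_ite_eq', two_mul]
  rw [hufun, h4.fderiv]
  simp only [ContinuousLinearMap.add_apply, ContinuousLinearMap.smul_apply,
    ContinuousLinearMap.smulRight_apply, ContinuousLinearMap.coe_id', id_eq,
    Pi.add_apply, Pi.smul_apply, smul_eq_mul, hsum]
  rw [Pi.single_apply]
  have hR' : norm3 x ≠ 0 := hR.ne'
  field_simp
  split_ifs <;> ring

lemma adj_mul_self (c g : ℝ) (x : Fin 3 → ℝ) :
    Matrix.adjugate (Matrix.of fun i j => c * x i * x j + g * (if i = j then 1 else 0)) *ᵥ x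
      = (g ^ 2) • x := by
  funext i
  rw [adjugate_fin_three]
  fin_cases i <;>
    simp [Matrix.mulVec, dotProduct, Fin.sum_univ_three, Matrix.cons_val_zero,
      Matrix.cons_val_one, Matrix.vecHead, Matrix.vecTail] <;> ring

lemma pointwise_key (r r' : ℝ → ℝ)
    (hr : ∀ R ∈ Set.Ioc (0 : ℝ) 1, 0 < r R ∧ HasDerivAt r (r' R) R)
    (u : (Fin 3 → ℝ) → (Fin 3 → ℝ))
    (hu : ∀ x, u x = (r (norm3 x) / norm3 x) • x)
    (J : (Fin 3 → ℝ) → Matrix (Fin 3) (Fin 3) ℝ)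
    (hJ : ∀ x, J x = Matrix.of fun i j => fderiv ℝ u x (Pi.single j 1) i)
    (x : Fin 3 → ℝ) (hx : x ≠ 0) (hx1 : norm3 x ≤ 1) :
    Matrix.adjugate (J x) *ᵥ (((norm3 (u x)) ^ 3)⁻¹ • u x) = ((norm3 x) ^ 3)⁻¹ • x := by
  have hR : 0 < norm3 x := norm3_pos hx
  obtain ⟨ha, hder⟩ := hr (norm3 x) ⟨hR, hx1⟩
  have hJx : J x = Matrix.of fun i j =>
      (r' (norm3 x) / (norm3 x) ^ 2 - r (norm3 x) / (norm3 x) ^ 3) * x i * x j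
        + (r (norm3 x) / norm3 x) * (if i = j then 1 else 0) := by
    rw [hJ x]
    ext i j
    simp only [Matrix.of_apply]
    exact fderiv_u_single hu hx hder i j
  have hux : u x = (r (norm3 x) / norm3 x) • x := hu x
  have hnu : norm3 (u x) = r (norm3 x) := by
    rw [hux, norm3_smul, abs_of_pos (div_pos ha hR), div_mul_cancel₀ _ hR.ne']
  rw [hnu, hux, smul_smul, Matrix.mulVec_smul, hJx, adj_mul_self, smul_smul]
  congr 1
  field_simp

lemma norm3_continuous : Continuous norm3 :=
  Real.continuous_sqrt.comp (continuous_finset_sum _ fun i _ => (continuous_apply i).pow 2)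


/-- for the radial map u(x) = r(|x|) x/|x| with r > 0 of class C¹,
(adj ∇u)(u/|u|³) = x/|x|³ for x ≠ 0, and hence for every exponent q,
∫_B |adj ∇u (u/|u|³)|^q dx = ∫_B |x|^{-2q} dx. -/
theorem radial_G_eq_and_integral (r r' : ℝ → ℝ)
    (hr : ∀ R ∈ Set.Ioc (0 : ℝ) 1, 0 < r R ∧ HasDerivAt r (r' R) R)
    (u : (Fin 3 → ℝ) → (Fin 3 → ℝ))
    (hu : ∀ x, u x = (r (norm3 x) / norm3 x) • x)
    (J : (Fin 3 → ℝ) → Matrix (Fin 3) (Fin 3) ℝ)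
    (hJ : ∀ x, J x = Matrix.of fun i j => fderiv ℝ u x (Pi.single j 1) i) :
    (∀ x : Fin 3 → ℝ, x ≠ 0 → norm3 x ≤ 1 →
        Matrix.adjugate (J x) *ᵥ (((norm3 (u x)) ^ 3)⁻¹ • u x)
          = ((norm3 x) ^ 3)⁻¹ • x)
    ∧ ∀ q : ℝ,
        ∫ x in {x : Fin 3 → ℝ | norm3 x < 1},
            (norm3 (Matrix.adjugate (J x) *ᵥ (((norm3 (u x)) ^ 3)⁻¹ • u x))) ^ q
          = ∫ x in {x : Fin 3 → ℝ | norm3 x < 1}, (norm3 x) ^ (-(2 * q)) := by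
  
  refine ⟨fun x hx hx1 => pointwise_key r r' hr u hu J hJ x hx hx1, fun q => ?_⟩
  apply integral_congr_ae
  have hS : MeasurableSet {x : Fin 3 → ℝ | norm3 x < 1} :=
    (norm3_continuous.measurable) measurableSet_Iio
  rw [Filter.EventuallyEq, MeasureTheory.ae_restrict_iff' hS]
  have h0 : ∀ᵐ x : Fin 3 → ℝ, x ≠ 0 := by
    rw [MeasureTheory.ae_iff]
    simp [measure_singleton]
  filter_upwards [h0] with x hx0 hxS
  have hR : 0 < norm3 x := norm3_pos hx0
  rw [pointwise_key r r' hr u hu J hJ x hx0 (le_of_lt hxS), norm3_smul,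
    abs_of_pos (by positivity)]
  have h1 : ((norm3 x) ^ 3)⁻¹ * norm3 x = norm3 x ^ (-2 : ℝ) := by
    rw [Real.rpow_neg hR.le, show ((2:ℝ)) = ((2:ℕ):ℝ) by norm_num, Real.rpow_natCast]
    field_simp
  rw [h1, ← Real.rpow_mul hR.le, neg_mul]
end

section
/- Let w be a C² map on an open set U ⊂ ℝ³ with w(x) ≠ 0 on U. Then div G(w) = 0 on U, where G(w) = (adj ∇w)(w/|w|³). Specifically, div G(w) = |w|^{-3} (adj ∇w)_{jk}[∇w − 3 w̄ ⊗ (∇w)^T w̄]_{kj} + |w|^{-3} w_k (cof ∇w)_{kj,j}, the second term vanishes by the Piola identity, and the first vanishes since tr((adj ∇w) ∇w) = 3 det ∇w and tr((adj ∇w)(w̄ ⊗ (∇w)^T w̄)) = det ∇w. -/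
open Matrix

theorem divG_key (a00 a01 a02 a10 a11 a12 a20 a21 a22 b001 b002 b012 b101 b102 b112 b201 b202 b212 c0 c1 c2 r : ℝ) (hr : r ≠ 0) (hr2 : r ^ 2 = c0^2 + c1^2 + c2^2) :
    (a11 * a22 - a12 * a21) * ((r ^ 3)⁻¹ * a00 + c0 * (-(3 * r ^ 2 * (1 / (2 * r))) / (r ^ 3) ^ 2 * (c0 * a00 + c0 * a00 + (c1 * a10 + c1 * a10) + (c2 * a20 + c2 * a20)))) + (r ^ 3)⁻¹ * c0 * (a11 * b202 + a22 * b101 - (a12 * b201 + a21 * b102)) + ((-(a01 * a22) + a02 * a21) * ((r ^ 3)⁻¹ * a10 + c1 * (-(3 * r ^ 2 * (1 / (2 * r))) / (r ^ 3) ^ 2 * (c0 * a00 + c0 * a00 + (c1 * a10 + c1 * a10) + (c2 * a20 + c2 * a20)))) + (r ^ 3)⁻¹ * c1 * (-(a01 * b202 + a22 * b001) + (a02 * b201 + a21 * b002))) + ((a01 * a12 - a02 * a11) * ((r ^ 3)⁻¹ * a20 + c2 * (-(3 * r ^ 2 * (1 / (2 * r))) / (r ^ 3) ^ 2 * (c0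 * a00 + c0 * a00 + (c1 * a10 + c1 * a10) + (c2 * a20 + c2 * a20)))) + (r ^ 3)⁻¹ * c2 * (a01 * b102 + a12 * b001 - (a02 * b101 + a11 * b002))) + ((-(a10 * a22) + a12 * a20) * ((r ^ 3)⁻¹ * a01 + c0 * (-(3 * r ^ 2 * (1 / (2 * r))) / (r ^ 3) ^ 2 * (c0 * a01 + c0 * a01 + (c1 * a11 + c1 * a11) + (c2 * a21 + c2 * a21)))) + (r ^ 3)⁻¹ * c0 * (-(a10 * b212 + a22 * b101) + (a12 * b201 + a20 * b112)) + ((a00 * a22 - a02 * a20) * ((r ^ 3)⁻¹ * a11 + c1 * (-(3 * r ^ 2 * (1 / (2 * r))) / (r ^ 3) ^ 2 * (c0 * a01 + c0 * a01 + (c1 * a11 + c1 * a11) + (c2 * a21 + c2 * a21)))) + (r ^ 3)⁻¹ * c1 * (a00 * b212 + a22 * b001 - (a02 * b201 + a20 * b012))) + ((-(a00 * a12) + a02 * a10) * ((r ^ 3)⁻¹ * a21 + c2 * (-(3 * r ^ 2 * (1 / (2 * r))) / (r ^ 3) ^ 2 * (c0 * a01 + c0 * a01 + (c1 * a11 + c1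 * a11) + (c2 * a21 + c2 * a21)))) + (r ^ 3)⁻¹ * c2 * (-(a00 * b112 + a12 * b001) + (a02 * b101 + a10 * b012)))) + ((a10 * a21 - a11 * a20) * ((r ^ 3)⁻¹ * a02 + c0 * (-(3 * r ^ 2 * (1 / (2 * r))) / (r ^ 3) ^ 2 * (c0 * a02 + c0 * a02 + (c1 * a12 + c1 * a12) + (c2 * a22 + c2 * a22)))) + (r ^ 3)⁻¹ * c0 * (a10 * b212 + a21 * b102 - (a11 * b202 + a20 * b112)) + ((-(a00 * a21) + a01 * a20) * ((r ^ 3)⁻¹ * a12 + c1 * (-(3 * r ^ 2 * (1 / (2 * r))) / (r ^ 3) ^ 2 * (c0 * a02 + c0 * a02 + (c1 * a12 + c1 * a12) + (c2 * a22 + c2 * a22)))) + (r ^ 3)⁻¹ * c1 * (-(a00 * b212 + a21 * b002) + (a01 * b202 + a20 * b012))) + ((a00 * a11 - a01 * a10) * ((r ^ 3)⁻¹ * a22 + c2 * (-(3 * r ^ 2 * (1 / (2 * r))) / (r ^ 3) ^ 2 * (c0 * a02 + c0 * a02 + (c1 * a12 + c1 * a12) + (c2 * a22 + c2 * a22))))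 + (r ^ 3)⁻¹ * c2 * (a00 * b112 + a11 * b002 - (a01 * b102 + a10 * b012)))) = 0 := by
  have hinv : ((r:ℝ) ^ 3)⁻¹ = r ^ 4 / r ^ 7 := by
    rw [eq_div_iff (pow_ne_zero 7 hr)]
    field_simp
  rw [hinv]
  linear_combination (3 * (a00*(a11*a22-a12*a21)-a01*(a10*a22-a12*a20)+a02*(a10*a21-a11*a20)) * r^2 / r^7) * hr2

set_option maxHeartbeats 2000000 in
/-- for a C² map w with w ≠ 0 on an open set U,
div G(w) = 0 on U, where G(w) = (adj ∇w)(w/|w|³). -/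
theorem div_G_eq_zero (U : Set (Fin 3 → ℝ)) (hU : IsOpen U)
    (w : (Fin 3 → ℝ) → (Fin 3 → ℝ)) (hw : ContDiffOn ℝ 2 w U)
    (hw0 : ∀ x ∈ U, w x ≠ 0)
    (G : (Fin 3 → ℝ) → (Fin 3 → ℝ))
    (hG : ∀ x, G x =
      Matrix.adjugate (Matrix.of fun i j => fderiv ℝ w x (Pi.single j 1) i) *ᵥ
        (((norm3 (w x)) ^ 3)⁻¹ • w x)) :
    ∀ x ∈ U, ∑ j, fderiv ℝ (fun y => G y j) x (Pi.single j 1) = 0 := by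
  intro x hx
  have hmem : U ∈ nhds x := hU.mem_nhds hx
  have hw2 : ContDiffAt ℝ 2 w x := hw.contDiffAt hmem
  have hφ : ContDiffAt ℝ 1 (fderiv ℝ w) x := hw2.fderiv_right le_rfl
  have hφd : DifferentiableAt ℝ (fderiv ℝ w) x := hφ.differentiableAt (by norm_num)
  set Φ := fderiv ℝ (fderiv ℝ w) x with hΦdef
  have hΦ : HasFDerivAt (fderiv ℝ w) Φ x := hφd.hasFDerivAt
  have hev : ∀ᶠ y in nhds x, HasFDerivAt w (fderiv ℝ w y) y := by
    filter_upwards [hU.eventually_mem hx] with y hy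
    exact ((hw.contDiffAt (hU.mem_nhds hy)).differentiableAt (by norm_num)).hasFDerivAt
  have hsym : ∀ u v, Φ u v = Φ v u := fun u v =>
    second_derivative_symmetric_of_eventually_of_real hev hΦ u v
  -- building blocks
  have hwd : HasFDerivAt w (fderiv ℝ w x) x := (hw2.differentiableAt (by norm_num)).hasFDerivAt
  have hn : ∀ a b : Fin 3, HasFDerivAt (fun y => fderiv ℝ w y (Pi.single b 1) a)
      (((ContinuousLinearMap.proj a : (Fin 3 → ℝ) →L[ℝ] ℝ).comp
        (ContinuousLinearMap.apply ℝ (Fin 3 → ℝ) (Pi.single b 1))).comp Φ) x := by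
    intro a b
    exact (((ContinuousLinearMap.proj a).comp
      (ContinuousLinearMap.apply ℝ (Fin 3 → ℝ) (Pi.single b 1))).hasFDerivAt).comp x hΦ
  have hwk : ∀ k : Fin 3, HasFDerivAt (fun y => w y k)
      ((ContinuousLinearMap.proj k : (Fin 3 → ℝ) →L[ℝ] ℝ).comp (fderiv ℝ w x)) x :=
    fun k => ((ContinuousLinearMap.proj k : (Fin 3 → ℝ) →L[ℝ] ℝ).hasFDerivAt).comp x hwd
  have hq : HasFDerivAt (fun y => ∑ i, w y i ^ 2)
      (∑ i : Fin 3, (w x i • ((ContinuousLinearMap.proj i : (Fin 3 → ℝ) →L[ℝ] ℝ).comp (fderiv ℝ w x))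
        + w x i • ((ContinuousLinearMap.proj i : (Fin 3 → ℝ) →L[ℝ] ℝ).comp (fderiv ℝ w x)))) x := by
    have : (fun y => ∑ i, w y i ^ 2) = fun y => ∑ i : Fin 3, w y i * w y i := by
      funext y; simp [pow_two]
    rw [this]
    exact HasFDerivAt.fun_sum fun i _ => (hwk i).fun_mul (hwk i)
  -- s function
  have hq0 : 0 < ∑ i, w x i ^ 2 := by
    have := hw0 x hx
    have h1 : ∃ i, w x i ≠ 0 := by
      by_contra h
      push_neg at h
      exact this (funext fun i => h i)
    obtain ⟨i, hi⟩ := h1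
    have : 0 < w x i ^ 2 := by positivity
    exact lt_of_lt_of_le this (Finset.single_le_sum (f := fun j => w x j ^ 2) (fun j _ => by positivity) (Finset.mem_univ i))
  have hr0 : 0 < Real.sqrt (∑ i, w x i ^ 2) := Real.sqrt_pos.mpr hq0
  have hg : HasDerivAt (fun t => (Real.sqrt t ^ 3)⁻¹)
      (-(3 * Real.sqrt (∑ i, w x i ^ 2) ^ 2 * (1 / (2 * Real.sqrt (∑ i, w x i ^ 2)))) /
        (Real.sqrt (∑ i, w x i ^ 2) ^ 3) ^ 2) (∑ i, w x i ^ 2) := by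
    have h1 := (Real.hasDerivAt_sqrt hq0.ne').fun_pow 3
    have h2 := h1.fun_inv (by positivity)
    simpa using h2
  have hs : HasFDerivAt (fun y => ((norm3 (w y)) ^ 3)⁻¹)
      ((-(3 * Real.sqrt (∑ i, w x i ^ 2) ^ 2 * (1 / (2 * Real.sqrt (∑ i, w x i ^ 2)))) /
        (Real.sqrt (∑ i, w x i ^ 2) ^ 3) ^ 2) • (∑ i : Fin 3, (w x i • ((ContinuousLinearMap.proj i : (Fin 3 → ℝ) →L[ℝ] ℝ).comp (fderiv ℝ w x))
        + w x i • ((ContinuousLinearMap.proj i : (Fin 3 → ℝ) →L[ℝ] ℝ).comp (fderiv ℝ w x))))) x := by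
    exact hg.comp_hasFDerivAt (f := fun y => ∑ i, w y i ^ 2) x hq
  have hu : ∀ k : Fin 3, HasFDerivAt (fun y => ((norm3 (w y)) ^ 3)⁻¹ * w y k)
      (((norm3 (w x)) ^ 3)⁻¹ • ((ContinuousLinearMap.proj k : (Fin 3 → ℝ) →L[ℝ] ℝ).comp (fderiv ℝ w x))
        + w x k • ((-(3 * Real.sqrt (∑ i, w x i ^ 2) ^ 2 * (1 / (2 * Real.sqrt (∑ i, w x i ^ 2)))) /
        (Real.sqrt (∑ i, w x i ^ 2) ^ 3) ^ 2) • (∑ i : Fin 3, (w x i • ((ContinuousLinearMap.proj i : (Fin 3 → ℝ) →L[ℝ] ℝ).comp (fderiv ℝ w x))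
        + w x i • ((ContinuousLinearMap.proj i : (Fin 3 → ℝ) →L[ℝ] ℝ).comp (fderiv ℝ w x)))))) x :=
    fun k => hs.mul (hwk k)
  have hA0 : (fun y => G y 0) = (fun y =>
      (fderiv ℝ w y (Pi.single 1 1) 1 * fderiv ℝ w y (Pi.single 2 1) 2 - fderiv ℝ w y (Pi.single 2 1) 1 * fderiv ℝ w y (Pi.single 1 1) 2) * (((norm3 (w y)) ^ 3)⁻¹ * w y 0) +
      (-(fderiv ℝ w y (Pi.single 1 1) 0 * fderiv ℝ w y (Pi.single 2 1) 2) + fderiv ℝ w y (Pi.single 2 1) 0 * fderiv ℝ w y (Pi.single 1 1) 2) * (((norm3 (w y)) ^ 3)⁻¹ * w y 1) +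
      (fderiv ℝ w y (Pi.single 1 1) 0 * fderiv ℝ w y (Pi.single 2 1) 1 - fderiv ℝ w y (Pi.single 2 1) 0 * fderiv ℝ w y (Pi.single 1 1) 1) * (((norm3 (w y)) ^ 3)⁻¹ * w y 2)) := by
    funext y
    rw [hG y]
    simp [adjugate_fin_three, Matrix.mulVec, dotProduct, Fin.sum_univ_three]
    try ring
  have hF0 := ((((((hn 1 1).fun_mul (hn 2 2)).fun_sub ((hn 1 2).fun_mul (hn 2 1))).fun_mul (hu 0)).fun_add (((((hn 0 1).fun_mul (hn 2 2)).fun_neg).fun_add ((hn 0 2).fun_mul (hn 2 1))).fun_mul (hu 1))).fun_add ((((hn 0 1).fun_mul (hn 1 2)).fun_sub ((hn 0 2).fun_mul (hn 1 1))).fun_mul (hu 2)))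
  have hA1 : (fun y => G y 1) = (fun y =>
      (-(fderiv ℝ w y (Pi.single 0 1) 1 * fderiv ℝ w y (Pi.single 2 1) 2) + fderiv ℝ w y (Pi.single 2 1) 1 * fderiv ℝ w y (Pi.single 0 1) 2) * (((norm3 (w y)) ^ 3)⁻¹ * w y 0) +
      (fderiv ℝ w y (Pi.single 0 1) 0 * fderiv ℝ w y (Pi.single 2 1) 2 - fderiv ℝ w y (Pi.single 2 1) 0 * fderiv ℝ w y (Pi.single 0 1) 2) * (((norm3 (w y)) ^ 3)⁻¹ * w y 1) +
      (-(fderiv ℝ w y (Pi.single 0 1) 0 * fderiv ℝ w y (Pi.single 2 1) 1) + fderiv ℝ w y (Pi.single 2 1) 0 * fderiv ℝ w y (Pi.single 0 1) 1) * (((norm3 (w y)) ^ 3)⁻¹ * w y 2)) := by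
    funext y
    rw [hG y]
    simp [adjugate_fin_three, Matrix.mulVec, dotProduct, Fin.sum_univ_three]
    try ring
  have hF1 := (((((((hn 1 0).fun_mul (hn 2 2)).fun_neg).fun_add ((hn 1 2).fun_mul (hn 2 0))).fun_mul (hu 0)).fun_add ((((hn 0 0).fun_mul (hn 2 2)).fun_sub ((hn 0 2).fun_mul (hn 2 0))).fun_mul (hu 1))).fun_add (((((hn 0 0).fun_mul (hn 1 2)).fun_neg).fun_add ((hn 0 2).fun_mul (hn 1 0))).fun_mul (hu 2)))
  have hA2 : (fun y => G y 2) = (fun y =>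
      (fderiv ℝ w y (Pi.single 0 1) 1 * fderiv ℝ w y (Pi.single 1 1) 2 - fderiv ℝ w y (Pi.single 1 1) 1 * fderiv ℝ w y (Pi.single 0 1) 2) * (((norm3 (w y)) ^ 3)⁻¹ * w y 0) +
      (-(fderiv ℝ w y (Pi.single 0 1) 0 * fderiv ℝ w y (Pi.single 1 1) 2) + fderiv ℝ w y (Pi.single 1 1) 0 * fderiv ℝ w y (Pi.single 0 1) 2) * (((norm3 (w y)) ^ 3)⁻¹ * w y 1) +
      (fderiv ℝ w y (Pi.single 0 1) 0 * fderiv ℝ w y (Pi.single 1 1) 1 - fderiv ℝ w y (Pi.single 1 1) 0 * fderiv ℝ w y (Pi.single 0 1) 1) * (((norm3 (w y)) ^ 3)⁻¹ * w y 2)) := by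
    funext y
    rw [hG y]
    simp [adjugate_fin_three, Matrix.mulVec, dotProduct, Fin.sum_univ_three]
    try ring
  have hF2 := ((((((hn 1 0).fun_mul (hn 2 1)).fun_sub ((hn 1 1).fun_mul (hn 2 0))).fun_mul (hu 0)).fun_add (((((hn 0 0).fun_mul (hn 2 1)).fun_neg).fun_add ((hn 0 1).fun_mul (hn 2 0))).fun_mul (hu 1))).fun_add ((((hn 0 0).fun_mul (hn 1 1)).fun_sub ((hn 0 1).fun_mul (hn 1 0))).fun_mul (hu 2)))
  rw [Fin.sum_univ_three, hA0, hA1, hA2, hF0.fderiv, hF1.fderiv, hF2.fderiv]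
  simp only [ContinuousLinearMap.add_apply, ContinuousLinearMap.smul_apply,
    ContinuousLinearMap.sub_apply, ContinuousLinearMap.neg_apply,
    ContinuousLinearMap.comp_apply, ContinuousLinearMap.proj_apply,
    ContinuousLinearMap.apply_apply, ContinuousLinearMap.sum_apply,
    smul_eq_mul, Fin.sum_univ_three, norm3]
  rw [hsym (Pi.single 1 1) (Pi.single 0 1), hsym (Pi.single 2 1) (Pi.single 0 1),
      hsym (Pi.single 2 1) (Pi.single 1 1)]
  exact divG_key (fderiv ℝ w x (Pi.single 0 1) 0) (fderiv ℝ w x (Pi.single 1 1) 0) (fderiv ℝ w x (Pi.single 2 1) 0) (fderiv ℝ w x (Pi.single 0 1) 1) (fderiv ℝ w x (Pi.single 1 1) 1) (fderiv ℝ w x (Pi.single 2 1) 1) (fderiv ℝ w x (Pi.single 0 1) 2) (fderiv ℝ w x (Pi.single 1 1) 2) (fderiv ℝ w x (Pi.single 2 1) 2) (Φ (Pi.single 0 1) (Pi.single 1 1) 0) (Φ (Pi.single 0 1) (Pi.single 2 1) 0) (Φ (Pi.single 1 1) (Pi.single 2 1) 0) (Φ (Pi.single 0 1) (Pi.single 1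 1) 1) (Φ (Pi.single 0 1) (Pi.single 2 1) 1) (Φ (Pi.single 1 1) (Pi.single 2 1) 1) (Φ (Pi.single 0 1) (Pi.single 1 1) 2) (Φ (Pi.single 0 1) (Pi.single 2 1) 2) (Φ (Pi.single 1 1) (Pi.single 2 1) 2) (w x 0) (w x 1) (w x 2)
    (Real.sqrt (w x 0 ^ 2 + w x 1 ^ 2 + w x 2 ^ 2))
    (ne_of_gt (by simpa [Fin.sum_univ_three] using hr0))
    (Real.sq_sqrt (by positivity))
end
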